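/- arXiv:1110.1243 — 3 statements merged into one kernel-verified Lean document; each statement's English description precedes it below -/
import Mathlib

section
/- Let X be a Banach space, (x_k) a weakly Cauchy sequence in X, and c > 0 such that ca(x_k) > c. Then there exists a subsequence (x_{k_n}) of (x_k) such that wca(x_{k_n}) ≥ c/2, i.e., every further subsequence (y_l) of (x_{k_n}) satisfies ca(y_l) ≥ c/2. -/
open Metric NormedSpace Filter Topology Set

noncomputable section

/-- A subset of a Banach space is weakly compact if it is compact in the weak topology. -/
def IsWeaklyCompact {Z : Type*} [NormedAddCommGroup Z] [NormedSpace ℝ Z] (K : Set Z) : Prop :=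
  IsCompact (toWeakSpace ℝ Z '' K)

/-- `ca (x_k) = inf_n sup_{i,j ≥ n} ‖x_i - x_j‖`. -/
def ca {Z : Type*} [NormedAddCommGroup Z] (x : ℕ → Z) : ℝ :=
  ⨅ n : ℕ, sSup {r : ℝ | ∃ i j : ℕ, n ≤ i ∧ n ≤ j ∧ r = ‖x i - x j‖}

/-- `wca` is the infimum of `ca` over all subsequences. -/
def wca {Z : Type*} [NormedAddCommGroup Z] (x : ℕ → Z) : ℝ :=
  ⨅ φ : {φ : ℕ → ℕ // StrictMono φ}, ca (x ∘ φ)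

/-- A sequence is weakly Cauchy if `(x*(x_k))` converges for every functional `x*`. -/
def WeaklyCauchy {Z : Type*} [NormedAddCommGroup Z] [NormedSpace ℝ Z] (x : ℕ → Z) : Prop :=
  ∀ f : StrongDual ℝ Z, ∃ l : ℝ, Tendsto (fun n => f (x n)) atTop (nhds l)

/-- A sequence is weakly null if `x*(x_k) → 0` for every functional `x*`. -/
def WeaklyNull {Z : Type*} [NormedAddCommGroup Z] [NormedSpace ℝ Z] (x : ℕ → Z) : Prop :=
  ∀ f : StrongDual ℝ Z, Tendsto (fun n => f (x n)) atTop (nhds 0)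

/-- `cc T`: measure of non-complete-continuity of an operator. -/
def cc {X Y : Type*} [NormedAddCommGroup X] [NormedSpace ℝ X]
    [NormedAddCommGroup Y] [NormedSpace ℝ Y] (T : X →L[ℝ] Y) : ℝ :=
  sSup {r : ℝ | ∃ x : ℕ → X, (∀ n, ‖x n‖ ≤ 1) ∧ WeaklyCauchy x ∧
    r = ca (fun n => T (x n))}

/-- Non-symmetrized Hausdorff distance `d̂(A,B) = sup_{a ∈ A} dist(a, B)`. -/
def dhat {Z : Type*} [NormedAddCommGroup Z] (A B : Set Z) : ℝ :=
  ⨆ a : A, infDist (a : Z) B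

/-- de Blasi measure of weak non-compactness. -/
def deBlasiOmega {Z : Type*} [NormedAddCommGroup Z] [NormedSpace ℝ Z] (A : Set Z) : ℝ :=
  ⨅ K : {K : Set Z // K.Nonempty ∧ IsWeaklyCompact K}, dhat A K

/-- Hausdorff measure of non-compactness. -/
def hausdorffChi {Z : Type*} [NormedAddCommGroup Z] (A : Set Z) : ℝ :=
  ⨅ F : {F : Set Z // F.Finite ∧ F.Nonempty}, dhat A F

/-- weak* closure of a set of functionals. -/
def wstarClosure {E : Type*} [NormedAddCommGroup E] [NormedSpace ℝ E]
    (A : Set (StrongDual ℝ E)) : Set (StrongDual ℝ E) :=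
  StrongDual.toWeakDual ⁻¹' closure (StrongDual.toWeakDual '' A)

/-- `wk_Z(A) = d̂(cl_{w*}(ι(A)), ι(Z))` in the bidual. -/
def wkMeasure {Z : Type*} [NormedAddCommGroup Z] [NormedSpace ℝ Z] (A : Set Z) : ℝ :=
  dhat (wstarClosure ((inclusionInDoubleDual ℝ Z) '' A))
    (Set.range (inclusionInDoubleDual ℝ Z))

/-- `z` is a weak* cluster point of the sequence `u` of functionals. -/
def IsWeakStarClusterPt {E : Type*} [NormedAddCommGroup E] [NormedSpace ℝ E]
    (z : StrongDual ℝ E) (u : ℕ → StrongDual ℝ E) : Prop :=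
  MapClusterPt (StrongDual.toWeakDual z) atTop (fun n => StrongDual.toWeakDual (u n))

/-- `wck(A)`. -/
def wck {Z : Type*} [NormedAddCommGroup Z] [NormedSpace ℝ Z] (A : Set Z) : ℝ :=
  sSup {r : ℝ | ∃ x : ℕ → Z, (∀ n, x n ∈ A) ∧
    r = sInf {s : ℝ | ∃ (z : StrongDual ℝ (StrongDual ℝ Z)) (x₀ : Z),
      IsWeakStarClusterPt z (fun n => inclusionInDoubleDual ℝ Z (x n)) ∧
      s = ‖z - inclusionInDoubleDual ℝ Z x₀‖}}

/-- `ca_ρ` of a sequence. -/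
def caRho {Z : Type*} [NormedAddCommGroup Z] [NormedSpace ℝ Z] (x : ℕ → Z) : ℝ :=
  ⨆ K : {K : Set (StrongDual ℝ Z) // K ⊆ closedBall 0 1 ∧ IsWeaklyCompact K},
    ⨅ n : ℕ, sSup {r : ℝ | ∃ i j : ℕ, n ≤ i ∧ n ≤ j ∧
      ∃ f ∈ K.1, r = |f (x i) - f (x j)|}

/-- `wca_ρ` of a sequence. -/
def wcaRho {Z : Type*} [NormedAddCommGroup Z] [NormedSpace ℝ Z] (x : ℕ → Z) : ℝ :=
  ⨅ φ : {φ : ℕ → ℕ // StrictMono φ}, caRho (x ∘ φ)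

/-- `ca_{ρ*}` of a sequence in a dual space. -/
def caRhoStar {Z : Type*} [NormedAddCommGroup Z] [NormedSpace ℝ Z]
    (x : ℕ → StrongDual ℝ Z) : ℝ :=
  ⨆ K : {K : Set Z // K ⊆ closedBall 0 1 ∧ IsWeaklyCompact K},
    ⨅ n : ℕ, sSup {r : ℝ | ∃ i j : ℕ, n ≤ i ∧ n ≤ j ∧
      ∃ v ∈ K.1, r = |x i v - x j v|}

/-- `wca_{ρ*}` of a sequence in a dual space. -/
def wcaRhoStar {Z : Type*} [NormedAddCommGroup Z] [NormedSpace ℝ Z]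
    (x : ℕ → StrongDual ℝ Z) : ℝ :=
  ⨅ φ : {φ : ℕ → ℕ // StrictMono φ}, caRhoStar (x ∘ φ)

/-- `δ(x_k)`. -/
def deltaSeq {Z : Type*} [NormedAddCommGroup Z] [NormedSpace ℝ Z] (x : ℕ → Z) : ℝ :=
  ⨆ f : (closedBall (0 : StrongDual ℝ Z) 1),
    ⨅ n : ℕ, sSup {r : ℝ | ∃ i j : ℕ, n ≤ i ∧ n ≤ j ∧
      r = |(f : StrongDual ℝ Z) (x i) - (f : StrongDual ℝ Z) (x j)|}

/-- The adjoint of a bounded operator between Banach spaces. -/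
def adjointOp {X Y : Type*} [NormedAddCommGroup X] [NormedSpace ℝ X]
    [NormedAddCommGroup Y] [NormedSpace ℝ Y] (T : X →L[ℝ] Y) :
    StrongDual ℝ Y →L[ℝ] StrongDual ℝ X :=
  (ContinuousLinearMap.compL ℝ X Y ℝ).flip T

/-!
A weakly Cauchy sequence is bounded and converges weak* in the bidual to some `z`. Since
`ca(x_k) > c`, arbitrarily far out there are `i, j` with `c < ‖x_i - x_j‖ ≤ ‖x_i - z‖ + ‖x_j - z‖`,
so some subsequence stays at distance `> c/2` from `z`. For any further subsequence `(y_l)` and any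
`n`, a functional `f` of norm `≤ 1` almost norming `y_n - z` gives `|f(y_n) - z(f)| > c/2`; as
`f(y_l) → z(f)`, this forces `‖y_n - y_l‖ > c/2` for all large `l`, hence `ca(y_l) ≥ c/2`.
-/

section CauchyOscillation

variable {Z : Type*} [NormedAddCommGroup Z]

lemma ca_le_sSup (x : ℕ → Z) (n : ℕ) :
    ca x ≤ sSup {r : ℝ | ∃ i j : ℕ, n ≤ i ∧ n ≤ j ∧ r = ‖x i - x j‖} := by
  refine ciInf_le ⟨0, ?_⟩ n
  rintro _ ⟨m, rfl⟩
  exact Real.sSup_nonneg (by rintro _ ⟨i, j, -, -, rfl⟩; positivity)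

lemma exists_lt_norm_sub_of_lt_ca {x : ℕ → Z} {c : ℝ} (h : c < ca x) (n : ℕ) :
    ∃ i j, n ≤ i ∧ n ≤ j ∧ c < ‖x i - x j‖ := by
  have hsup := h.trans_le (ca_le_sSup x n)
  obtain ⟨_, ⟨i, j, hi, hj, rfl⟩, hc⟩ :=
    exists_lt_of_lt_csSup (by exact ⟨_, n, n, le_rfl, le_rfl, rfl⟩) hsup
  exact ⟨i, j, hi, hj, hc⟩

lemma le_ca_of_forall_exists_le_norm_sub {x : ℕ → Z} {M c : ℝ} (hM : ∀ k, ‖x k‖ ≤ M)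
    (h : ∀ n, ∃ j, n ≤ j ∧ c ≤ ‖x n - x j‖) : c ≤ ca x := by
  refine le_ciInf fun n => ?_
  obtain ⟨j, hj, hc⟩ := h n
  refine hc.trans (le_csSup ⟨M + M, ?_⟩ ⟨n, j, le_rfl, hj, rfl⟩)
  rintro _ ⟨i, j, -, -, rfl⟩
  exact (norm_sub_le _ _).trans (add_le_add (hM i) (hM j))

lemma le_wca_of_forall_le_ca {x : ℕ → Z} {c : ℝ}
    (h : ∀ ψ : ℕ → ℕ, StrictMono ψ → c ≤ ca (x ∘ ψ)) : c ≤ wca x :=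
  haveI : Nonempty {ψ : ℕ → ℕ // StrictMono ψ} := ⟨⟨id, strictMono_id⟩⟩
  le_ciInf fun ψ => h ψ.1 ψ.2

lemma ca_comp_linearIsometry {R F : Type*} [Semiring R] [Module R Z] [NormedAddCommGroup F]
    [Module R F] (L : Z →ₗᵢ[R] F) (x : ℕ → Z) : ca (L ∘ x) = ca x := by
  simp only [ca, Function.comp_apply, ← map_sub, LinearIsometry.norm_map]

lemma frequently_lt_norm_sub_of_lt_ca {x : ℕ → Z} {c : ℝ} (h : c < ca x) (z : Z) :
    ∃ᶠ m in atTop, c / 2 < ‖x m - z‖ := by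
  refine frequently_atTop.2 fun n => ?_
  obtain ⟨i, j, hi, hj, hij⟩ := exists_lt_norm_sub_of_lt_ca h n
  have htri := norm_sub_le_norm_sub_add_norm_sub (x i) z (x j)
  rw [norm_sub_rev z] at htri
  by_cases hxi : c / 2 < ‖x i - z‖
  · exact ⟨i, hi, hxi⟩
  · exact ⟨j, hj, by linarith⟩

end CauchyOscillation

section WeakStarLimit

variable {X : Type*} [NormedAddCommGroup X] [NormedSpace ℝ X] {x : ℕ → X}

lemma WeaklyCauchy.exists_bound (hx : WeaklyCauchy x) : ∃ M, ∀ k, ‖x k‖ ≤ M := by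
  obtain ⟨M, hM⟩ := banach_steinhaus (g := fun k => inclusionInDoubleDual ℝ X (x k)) fun f => by
    obtain ⟨l, hl⟩ := hx f
    obtain ⟨C, hC⟩ := hl.norm.bddAbove_range
    exact ⟨C, fun k => hC ⟨k, rfl⟩⟩
  exact ⟨M, fun k => (inclusionInDoubleDualLi ℝ).norm_map (x k) ▸ hM k⟩

lemma WeaklyCauchy.exists_tendsto_bidual (hx : WeaklyCauchy x) :
    ∃ z : StrongDual ℝ (StrongDual ℝ X),
      ∀ f : StrongDual ℝ X, Tendsto (fun n => f (x n)) atTop (𝓝 (z f)) := by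
  choose l hl using hx
  exact ⟨continuousLinearMapOfTendsto (fun n => inclusionInDoubleDual ℝ X (x n))
    (tendsto_pi_nhds.2 hl), hl⟩

end WeakStarLimit

lemma eventually_lt_norm_sub_of_lt_norm_sub_bidual {𝕜 X : Type*} [RCLike 𝕜]
    [NormedAddCommGroup X] [NormedSpace 𝕜 X] {y : ℕ → X} {z : StrongDual 𝕜 (StrongDual 𝕜 X)}
    (hz : ∀ f : StrongDual 𝕜 X, Tendsto (fun m => f (y m)) atTop (𝓝 (z f))) {a : X} {r : ℝ}
    (h : r < ‖inclusionInDoubleDual 𝕜 X a - z‖) : ∀ᶠ m in atTop, r < ‖a - y m‖ := by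
  obtain ⟨f, hf, hr⟩ := (inclusionInDoubleDual 𝕜 X a - z).exists_lt_apply_of_lt_opNorm h
  have hlim : Tendsto (fun m => ‖f (a - y m)‖) atTop (𝓝 ‖f a - z f‖) := by
    simpa only [map_sub] using (tendsto_const_nhds.sub (hz f)).norm
  filter_upwards [hlim.eventually_const_lt (by simpa using hr)] with m hm
  calc r < ‖f (a - y m)‖ := hm
    _ ≤ ‖f‖ * ‖a - y m‖ := f.le_opNorm _
    _ ≤ ‖a - y m‖ := mul_le_of_le_one_left (norm_nonneg _) hf.le

theorem statement0_general {X : Type*} [NormedAddCommGroup X] [NormedSpace ℝ X]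
    (x : ℕ → X) (hx : WeaklyCauchy x) (c : ℝ) (hca : c < ca x) :
    ∃ φ : ℕ → ℕ, StrictMono φ ∧ c / 2 ≤ wca (x ∘ φ) ∧
      ∀ ψ : ℕ → ℕ, StrictMono ψ → c / 2 ≤ ca ((x ∘ φ) ∘ ψ) := by
  obtain ⟨M, hM⟩ := hx.exists_bound
  obtain ⟨z, hz⟩ := hx.exists_tendsto_bidual
  have hca' : c < ca (inclusionInDoubleDualLi ℝ ∘ x) := by rwa [ca_comp_linearIsometry]
  obtain ⟨φ, hφ, hfar⟩ := extraction_of_frequently_atTop (frequently_lt_norm_sub_of_lt_ca hca' z)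
  have hsub : ∀ ψ : ℕ → ℕ, StrictMono ψ → c / 2 ≤ ca ((x ∘ φ) ∘ ψ) := by
    intro ψ hψ
    have hzy f := (hz f).comp (hφ.comp hψ).tendsto_atTop
    refine le_ca_of_forall_exists_le_norm_sub (fun k => hM _) fun n => ?_
    obtain ⟨j, hfar_j, hj⟩ := ((eventually_lt_norm_sub_of_lt_norm_sub_bidual hzy
      (hfar (ψ n))).and (eventually_ge_atTop n)).exists
    exact ⟨j, hj, hfar_j.le⟩
  exact ⟨φ, hφ, le_wca_of_forall_le_ca hsub, hsub⟩

/-- If `(x_k)` is a weakly Cauchy sequence in a Banach space `X` and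
`ca(x_k) > c > 0`, then there is a subsequence `(x_{k_n})` with `wca(x_{k_n}) ≥ c/2`,
i.e. every further subsequence `(y_l)` satisfies `ca(y_l) ≥ c/2`. -/
theorem statement0 {X : Type*} [NormedAddCommGroup X] [NormedSpace ℝ X] [CompleteSpace X]
    (x : ℕ → X) (hx : WeaklyCauchy x) (c : ℝ) (hc : 0 < c) (hca : c < ca x) :
    ∃ φ : ℕ → ℕ, StrictMono φ ∧ c / 2 ≤ wca (x ∘ φ) ∧
      ∀ ψ : ℕ → ℕ, StrictMono ψ → c / 2 ≤ ca ((x ∘ φ) ∘ ψ) :=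
  statement0_general x hx c hca

end
end

section
/- Let X be a Banach space and C > 0 such that limsup_n |x*_n(x_n)| ≤ C·wk_{X*}({x*_n : n ∈ ℕ}) whenever (x_n) is a weakly null sequence in the closed unit ball B_X and (x*_n) is a bounded sequence in X*. Then ca_{ρ*}(x*_n) ≤ (2C+1)·δ(x*_n) for every bounded sequence (x*_n) in X*. -/
open Metric NormedSpace Filter Topology Set

noncomputable section

/-!
Fix a weakly compact `K ⊆ B_X` and `t` below the tail oscillation of `(x*_n)` on `K`; pick
`i_n, j_n ≥ n` and `v_n ∈ K` with `|(x*_{i_n} - x*_{j_n}) v_n| > t`. Norming functionals of a dense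
sequence in the closed span of `(v_n)` separate its points, so the weak topology on that part of
`K` is metrizable and a subsequence `v_{φ k}` converges weakly to some `w ∈ K`. Feed the weakly
null `x_k = (v_{φ k} - w) / 2` and `g_k = x*_{i_{φ k}} - x*_{j_{φ k}}` to the hypothesis. Every
weak* cluster point of `(g_k)` in `X***` has norm at most `δ(x*_n)`, so `wk(g) ≤ δ`, while
`|g_k w|` is eventually below `δ + ε`; hence `(t - δ - ε) / 2 ≤ limsup |g_k x_k| ≤ C δ`.
-/

lemma mapClusterPt_atTop_of_mem_closure_range {α : Type*} [TopologicalSpace α] [T1Space α]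
    {u : ℕ → α} {z : α} (hz : z ∈ closure (range u)) (hz' : z ∉ range u) :
    MapClusterPt z atTop u := by
  refine mapClusterPt_atTop_iff_forall_mem_closure.2 fun n => ?_
  rw [← image_univ, ← Iio_union_Ici (a := n), image_union, closure_union] at hz
  refine hz.resolve_left fun hmem => hz' ?_
  rw [((finite_Iio n).image u).isClosed.closure_eq] at hmem
  exact image_subset_range _ _ hmem

lemma exists_lt_mem_of_lt_iInf_sSup {S : ℕ → Set ℝ} (hS : ∀ n, ∀ r ∈ S n, 0 ≤ r) {t : ℝ}
    (ht : 0 ≤ t) (h : t < ⨅ n, sSup (S n)) (n : ℕ) : ∃ r ∈ S n, t < r := by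
  have hlt : t < sSup (S n) := by
    refine h.trans_le (ciInf_le ⟨0, ?_⟩ n)
    rintro _ ⟨m, rfl⟩
    exact Real.sSup_nonneg (hS m)
  have hne : (S n).Nonempty := by
    by_contra hne
    rw [not_nonempty_iff_eq_empty.1 hne, Real.sSup_empty] at hlt
    linarith
  exact exists_lt_of_lt_csSup hne hlt

-- `deltaSeq x = ⨆ ‖F‖ ≤ 1, tailOsc (F ∘ x)` and `caRhoStar f = ⨆ K, tailOscOn f K` definitionally.
def tailOsc (a : ℕ → ℝ) : ℝ :=
  ⨅ n : ℕ, sSup {r : ℝ | ∃ i j : ℕ, n ≤ i ∧ n ≤ j ∧ r = |a i - a j|}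

lemma tailOsc_nonneg (a : ℕ → ℝ) : 0 ≤ tailOsc a :=
  Real.iInf_nonneg fun _ => Real.sSup_nonneg <| by rintro _ ⟨i, j, -, -, rfl⟩; positivity

lemma abs_sub_le_of_abs_le {a : ℕ → ℝ} {B : ℝ} (hB : ∀ n, |a n| ≤ B) (i j : ℕ) :
    |a i - a j| ≤ 2 * B :=
  (abs_sub _ _).trans (by linarith [hB i, hB j])

lemma tailOsc_le {a : ℕ → ℝ} {B : ℝ} (hB : ∀ n, |a n| ≤ B) : tailOsc a ≤ 2 * B := by
  refine (ciInf_le ⟨0, ?_⟩ 0).trans (Real.sSup_le ?_ ?_)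
  · rintro _ ⟨n, rfl⟩
    exact Real.sSup_nonneg <| by rintro _ ⟨i, j, -, -, rfl⟩; positivity
  · rintro _ ⟨i, j, -, -, rfl⟩
    exact abs_sub_le_of_abs_le hB i j
  · linarith [(abs_nonneg _).trans (hB 0)]

lemma exists_forall_abs_sub_lt_of_tailOsc_lt {a : ℕ → ℝ} {B t : ℝ} (hB : ∀ n, |a n| ≤ B)
    (h : tailOsc a < t) : ∃ n₀, ∀ i j, n₀ ≤ i → n₀ ≤ j → |a i - a j| < t := by
  obtain ⟨n₀, hn₀⟩ := exists_lt_of_ciInf_lt h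
  have hbdd : BddAbove {r : ℝ | ∃ i j : ℕ, n₀ ≤ i ∧ n₀ ≤ j ∧ r = |a i - a j|} := by
    refine ⟨2 * B, ?_⟩
    rintro _ ⟨i, j, -, -, rfl⟩
    exact abs_sub_le_of_abs_le hB i j
  exact ⟨n₀, fun i j hi hj => (le_csSup hbdd ⟨i, j, hi, hj, rfl⟩).trans_lt hn₀⟩

section DeltaSeq

variable {Z : Type*} [NormedAddCommGroup Z] [NormedSpace ℝ Z]

lemma abs_apply_le_of_norm_le_one {G : StrongDual ℝ Z} (hG : ‖G‖ ≤ 1) {z : Z} {M : ℝ}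
    (hz : ‖z‖ ≤ M) : |G z| ≤ M :=
  (G.le_of_opNorm_le hG z).trans (by simpa using hz)

lemma deltaSeq_nonneg (x : ℕ → Z) : 0 ≤ deltaSeq x :=
  Real.iSup_nonneg fun _ => tailOsc_nonneg _

lemma tailOsc_le_deltaSeq {x : ℕ → Z} {M : ℝ} (hM : ∀ n, ‖x n‖ ≤ M) {F : StrongDual ℝ Z}
    (hF : ‖F‖ ≤ 1) : tailOsc (fun n => F (x n)) ≤ deltaSeq x := by
  refine le_ciSup (f := fun G : closedBall (0 : StrongDual ℝ Z) 1 => tailOsc fun n => G.1 (x n))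
    ⟨2 * M, ?_⟩ ⟨F, mem_closedBall_zero_iff.2 hF⟩
  rintro _ ⟨G, rfl⟩
  exact tailOsc_le fun n => abs_apply_le_of_norm_le_one (mem_closedBall_zero_iff.1 G.2) (hM n)

lemma eventually_abs_apply_lt_deltaSeq_add {x g : ℕ → Z} {M : ℝ} (hM : ∀ n, ‖x n‖ ≤ M)
    (hg : ∀ k, ∃ i j, k ≤ i ∧ k ≤ j ∧ g k = x i - x j) {F : StrongDual ℝ Z} (hF : ‖F‖ ≤ 1)
    {ε : ℝ} (hε : 0 < ε) : ∀ᶠ k in atTop, |F (g k)| < deltaSeq x + ε := by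
  obtain ⟨n₀, hn₀⟩ := exists_forall_abs_sub_lt_of_tailOsc_lt
    (fun n => abs_apply_le_of_norm_le_one hF (hM n))
    ((tailOsc_le_deltaSeq hM hF).trans_lt (lt_add_of_pos_right _ hε))
  filter_upwards [eventually_ge_atTop n₀] with k hk
  obtain ⟨i, j, hi, hj, hgk⟩ := hg k
  rw [hgk, map_sub]
  exact hn₀ i j (hk.trans hi) (hk.trans hj)

lemma norm_le_of_isWeakStarClusterPt {g : ℕ → Z} {z : StrongDual ℝ (StrongDual ℝ Z)} {c : ℝ}
    (hc : 0 ≤ c) (hz : IsWeakStarClusterPt z fun k => inclusionInDoubleDual ℝ Z (g k))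
    (hg : ∀ G : StrongDual ℝ Z, ‖G‖ ≤ 1 → ∀ ε > 0, ∀ᶠ k in atTop, |G (g k)| < c + ε) :
    ‖z‖ ≤ c := by
  refine z.opNorm_le_of_unit_norm hc fun G hG => le_of_forall_pos_le_add fun ε hε => ?_
  have hclosed : IsClosed {u : WeakDual ℝ (StrongDual ℝ Z) | |u G| ≤ c + ε} :=
    isClosed_le (WeakDual.eval_continuous G).abs continuous_const
  exact hclosed.mem_of_mapClusterPt hz ((hg G hG.le ε hε).mono fun k hk => hk.le)

lemma wkMeasure_range_le_deltaSeq {x g : ℕ → Z} {M : ℝ} (hM : ∀ n, ‖x n‖ ≤ M)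
    (hg : ∀ k, ∃ i j, k ≤ i ∧ k ≤ j ∧ g k = x i - x j) :
    wkMeasure (range g) ≤ deltaSeq x := by
  set ι := inclusionInDoubleDual ℝ Z
  refine Real.iSup_le ?_ (deltaSeq_nonneg x)
  rintro ⟨z, hz⟩
  dsimp only
  by_cases hzg : z ∈ range (ι ∘ g)
  · obtain ⟨k, rfl⟩ := hzg
    rw [Function.comp_apply, infDist_zero_of_mem (mem_range_self (g k))]
    exact deltaSeq_nonneg x
  · have hrange : StrongDual.toWeakDual '' (ι '' range g) =
        range fun k => StrongDual.toWeakDual (ι (g k)) := by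
      rw [← range_comp, ← range_comp]; rfl
    have hcl : IsWeakStarClusterPt z fun k => ι (g k) := by
      refine mapClusterPt_atTop_of_mem_closure_range (hrange ▸ hz) ?_
      rintro ⟨k, hk⟩
      exact hzg ⟨k, StrongDual.toWeakDual.injective hk⟩
    have hnorm := norm_le_of_isWeakStarClusterPt (deltaSeq_nonneg x) hcl
      fun G hG ε hε => eventually_abs_apply_lt_deltaSeq_add hM hg hG hε
    refine (infDist_le_dist_of_mem (mem_range_self 0)).trans ?_
    rwa [map_zero, dist_zero_right]

end DeltaSeq

section WeakCompactness

variable {X : Type*} [NormedAddCommGroup X] [NormedSpace ℝ X]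

lemma WeaklyNull.const_smul {x : ℕ → X} (hx : WeaklyNull x) (c : ℝ) :
    WeaklyNull fun n => c • x n :=
  fun F => by simpa using (hx F).const_mul c

lemma IsWeaklyCompact.inter_of_convex {K s : Set X} (hK : IsWeaklyCompact K)
    (hs : Convex ℝ s) (hs' : IsClosed s) : IsWeaklyCompact (K ∩ s) := by
  have hclosed : IsClosed (toWeakSpace ℝ X '' s) := by
    rw [← hs'.closure_eq, hs.toWeakSpace_closure ℝ]
    exact isClosed_closure
  rw [IsWeaklyCompact, image_inter (toWeakSpace ℝ X).injective]
  exact hK.inter_right hclosed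

lemma eq_zero_of_mem_closure_range_of_norming {u : ℕ → X} {ψ : ℕ → StrongDual ℝ X}
    (hψ : ∀ m, ‖ψ m‖ ≤ 1) (hψu : ∀ m, ψ m (u m) = ‖u m‖) {x : X} (hx : x ∈ closure (range u))
    (h0 : ∀ m, ψ m x = 0) : x = 0 := by
  have hle : ∀ m, ‖x‖ ≤ 2 * dist x (u m) := fun m => by
    have hum : ‖u m‖ ≤ ‖u m - x‖ := by
      rw [← hψu m, ← sub_zero (ψ m (u m)), ← h0 m, ← map_sub]
      exact (le_abs_self _).trans (abs_apply_le_of_norm_le_one (hψ m) le_rfl)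
    rw [dist_eq_norm]
    linarith [norm_le_insert' x (u m), norm_sub_rev x (u m)]
  refine norm_le_zero_iff.1 (le_of_forall_pos_le_add fun ε hε => ?_)
  obtain ⟨m, hm⟩ := mem_closure_range_iff.1 hx (ε / 2) (half_pos hε)
  linarith [hle m]

lemma IsWeaklyCompact.exists_tendsto_subseq_of_separating {K : Set X} (hK : IsWeaklyCompact K)
    (ψ : ℕ → StrongDual ℝ X) (hψ : ∀ a ∈ K, ∀ b ∈ K, (∀ m, ψ m a = ψ m b) → a = b)
    {v : ℕ → X} (hv : ∀ n, v n ∈ K) :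
    ∃ w ∈ K, ∃ φ : ℕ → ℕ, StrictMono φ ∧
      Tendsto (fun k => toWeakSpace ℝ X (v (φ k))) atTop (𝓝 (toWeakSpace ℝ X w)) := by
  set e := toWeakSpace ℝ X
  have : CompactSpace (e '' K) := isCompact_iff_compactSpace.1 hK
  have : TopologicalSpace.MetrizableSpace (e '' K) := by
    refine Metric.PiNatEmbed.TopologicalSpace.MetrizableSpace.of_countable_separating
      (fun m (z : e '' K) => ψ m (e.symm z)) (fun m => ?_) ?_
    · exact (WeakBilin.eval_continuous (topDualPairing ℝ X).flip (ψ m)).comp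
        continuous_subtype_val
    · rintro ⟨_, a, ha, rfl⟩ ⟨_, b, hb, rfl⟩ hab
      by_contra! h
      refine hab (Subtype.ext (congrArg e (hψ a ha b hb fun m => ?_)))
      simpa using h m
  obtain ⟨_, ⟨w, hw, rfl⟩, φ, hφ, hlim⟩ :=
    (isSeqCompact_iff_seqCompactSpace.2 inferInstance : IsSeqCompact (e '' K))
      fun n => mem_image_of_mem e (hv n)
  exact ⟨w, hw, φ, hφ, hlim⟩

lemma IsWeaklyCompact.exists_weaklyNull_sub {K : Set X} (hK : IsWeaklyCompact K)
    {v : ℕ → X} (hv : ∀ n, v n ∈ K) :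
    ∃ w ∈ K, ∃ φ : ℕ → ℕ, StrictMono φ ∧ WeaklyNull fun k => v (φ k) - w := by
  set Y := (Submodule.span ℝ (range v)).topologicalClosure
  have hYsep : TopologicalSpace.IsSeparable (Y : Set X) := by
    rw [Submodule.topologicalClosure_coe]
    exact (countable_range v).isSeparable.span.closure
  obtain ⟨c, hc, hYc⟩ := hYsep
  obtain ⟨u, hu⟩ := (hc.insert 0).exists_eq_range (insert_nonempty 0 c)
  choose ψ hψ hψu using fun m => exists_dual_vector'' ℝ (u m)
  have hsep : ∀ a ∈ K ∩ Y, ∀ b ∈ K ∩ Y, (∀ m, ψ m a = ψ m b) → a = b := by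
    intro a ha b hb hab
    refine sub_eq_zero.1 (eq_zero_of_mem_closure_range_of_norming (u := u) hψ (fun m => ?_) ?_ ?_)
    · exact_mod_cast hψu m
    · exact closure_mono (hu ▸ subset_insert 0 c) (hYc (Y.sub_mem ha.2 hb.2))
    · simp [hab]
  have hvY : ∀ n, v n ∈ K ∩ Y := fun n =>
    ⟨hv n, (Submodule.span ℝ (range v)).le_topologicalClosure
      (Submodule.subset_span (mem_range_self n))⟩
  obtain ⟨w, hw, φ, hφ, hlim⟩ := (hK.inter_of_convex Y.convex
    (Submodule.span ℝ (range v)).isClosed_topologicalClosure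
    ).exists_tendsto_subseq_of_separating ψ hsep hvY
  refine ⟨w, hw.1, φ, hφ, fun F => ?_⟩
  have hF : Tendsto (fun k => F (v (φ k))) atTop (𝓝 (F w)) :=
    ((WeakBilin.eval_continuous (topDualPairing ℝ X).flip F).tendsto _).comp hlim
  simpa using hF.sub_const (F w)

end WeakCompactness

section CaRhoStar

variable {X : Type*} [NormedAddCommGroup X] [NormedSpace ℝ X]

def tailOscOn (f : ℕ → StrongDual ℝ X) (K : Set X) : ℝ :=
  ⨅ n : ℕ, sSup {r : ℝ | ∃ i j : ℕ, n ≤ i ∧ n ≤ j ∧ ∃ v ∈ K, r = |f i v - f j v|}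

lemma le_of_lt_tailOscOn {C : ℝ} (hC : 0 ≤ C)
    (h : ∀ (x : ℕ → X) (f : ℕ → StrongDual ℝ X), (∀ n, ‖x n‖ ≤ 1) → WeaklyNull x →
      (∃ M : ℝ, ∀ n, ‖f n‖ ≤ M) →
      Filter.limsup (fun n => |f n (x n)|) atTop ≤ C * wkMeasure (Set.range f))
    {f : ℕ → StrongDual ℝ X} {M : ℝ} (hM : ∀ n, ‖f n‖ ≤ M) {K : Set X}
    (hK : K ⊆ closedBall 0 1) (hKw : IsWeaklyCompact K) {t ε : ℝ} (ht : 0 ≤ t)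
    (htK : t < tailOscOn f K) (hε : 0 < ε) : t ≤ (2 * C + 1) * deltaSeq f + ε := by
  have hpick : ∀ n, ∃ i j, n ≤ i ∧ n ≤ j ∧ ∃ v ∈ K, t < |f i v - f j v| := fun n => by
    obtain ⟨_, ⟨i, j, hi, hj, v, hv, rfl⟩, hlt⟩ := exists_lt_mem_of_lt_iInf_sSup
      (by rintro _ _ ⟨i, j, -, -, v, -, rfl⟩; positivity) ht htK n
    exact ⟨i, j, hi, hj, v, hv, hlt⟩
  choose i j hi hj v hvK hv using hpick
  obtain ⟨w, hwK, φ, hφ, hnull⟩ := hKw.exists_weaklyNull_sub hvK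
  have hnorm : ∀ {z}, z ∈ K → ‖z‖ ≤ 1 := fun hz => mem_closedBall_zero_iff.1 (hK hz)
  set g : ℕ → StrongDual ℝ X := fun k => f (i (φ k)) - f (j (φ k))
  set x : ℕ → X := fun k => (2 : ℝ)⁻¹ • (v (φ k) - w)
  have hg : ∀ k, ∃ i' j', k ≤ i' ∧ k ≤ j' ∧ g k = f i' - f j' := fun k =>
    ⟨_, _, hφ.le_apply.trans (hi _), hφ.le_apply.trans (hj _), rfl⟩
  have hgM : ∀ k, ‖g k‖ ≤ 2 * M := fun k =>
    (norm_sub_le _ _).trans (by linarith [hM (i (φ k)), hM (j (φ k))])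
  have hx : ∀ k, ‖x k‖ ≤ 1 := fun k => by
    rw [norm_smul, norm_inv, Real.norm_two]
    linarith [norm_sub_le (v (φ k)) w, hnorm (hvK (φ k)), hnorm hwK]
  have hlimsup : limsup (fun k => |g k (x k)|) atTop ≤ C * deltaSeq f :=
    (h x g hx (hnull.const_smul _) ⟨2 * M, hgM⟩).trans
      (mul_le_mul_of_nonneg_left (wkMeasure_range_le_deltaSeq hM hg) hC)
  have hw : ∀ᶠ k in atTop, |g k w| < deltaSeq f + ε := by
    simpa using eventually_abs_apply_lt_deltaSeq_add hM hg
      (F := inclusionInDoubleDual ℝ X w) ((double_dual_bound ℝ X w).trans (hnorm hwK)) hε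
  have hlow : ∀ᶠ k in atTop, (t - (deltaSeq f + ε)) / 2 ≤ |g k (x k)| := hw.mono fun k hk => by
    have hgx : g k (x k) = 2⁻¹ * (g k (v (φ k)) - g k w) := by simp [x]
    rw [hgx, abs_mul, abs_of_pos (by norm_num : (0 : ℝ) < 2⁻¹)]
    have hgv : g k (v (φ k)) = f (i (φ k)) (v (φ k)) - f (j (φ k)) (v (φ k)) := rfl
    linarith [abs_sub_abs_le_abs_sub (g k (v (φ k))) (g k w), hgv ▸ hv (φ k)]
  have hbdd : IsBoundedUnder (· ≤ ·) atTop fun k => |g k (x k)| :=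
    isBoundedUnder_of ⟨2 * M, fun k => by
      simpa using ((g k).le_opNorm (x k)).trans
        ((mul_le_of_le_one_right (norm_nonneg _) (hx k)).trans (hgM k))⟩
  linarith [(le_limsup_of_frequently_le hlow.frequently hbdd).trans hlimsup]

end CaRhoStar

theorem statement7_general {X : Type*} [NormedAddCommGroup X] [NormedSpace ℝ X]
    (C : ℝ) (hC : 0 < C)
    (h : ∀ (x : ℕ → X) (f : ℕ → StrongDual ℝ X), (∀ n, ‖x n‖ ≤ 1) → WeaklyNull x →
      (∃ M : ℝ, ∀ n, ‖f n‖ ≤ M) →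
      Filter.limsup (fun n => |f n (x n)|) atTop ≤ C * wkMeasure (Set.range f))
    (f : ℕ → StrongDual ℝ X) (hf : ∃ M : ℝ, ∀ n, ‖f n‖ ≤ M) :
    caRhoStar f ≤ (2 * C + 1) * deltaSeq f := by
  obtain ⟨M, hM⟩ := hf
  have hR : 0 ≤ (2 * C + 1) * deltaSeq f := by
    have := deltaSeq_nonneg f
    positivity
  refine Real.iSup_le (fun ⟨K, hK, hKw⟩ => ?_) hR
  change tailOscOn f K ≤ _
  refine le_of_forall_lt_imp_le_of_dense fun t htK => ?_
  rcases lt_or_ge t 0 with ht | ht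
  · linarith
  · exact le_of_forall_pos_le_add fun ε hε =>
      le_of_lt_tailOscOn hC.le h hM hK hKw ht htK hε

/-- If `limsup |x*_n(x_n)| ≤ C·wk_{X*}({x*_n})` for every weakly null `(x_n)` in
`B_X` and bounded `(x*_n)` in `X*`, then `ca_{ρ*}(x*_n) ≤ (2C+1)·δ(x*_n)` for every bounded
sequence `(x*_n)` in `X*`. -/
theorem statement7 {X : Type*} [NormedAddCommGroup X] [NormedSpace ℝ X] [CompleteSpace X]
    (C : ℝ) (hC : 0 < C)
    (h : ∀ (x : ℕ → X) (f : ℕ → StrongDual ℝ X), (∀ n, ‖x n‖ ≤ 1) → WeaklyNull x →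
      (∃ M : ℝ, ∀ n, ‖f n‖ ≤ M) →
      Filter.limsup (fun n => |f n (x n)|) atTop ≤ C * wkMeasure (Set.range f))
    (f : ℕ → StrongDual ℝ X) (hf : ∃ M : ℝ, ∀ n, ‖f n‖ ≤ M) :
    caRhoStar f ≤ (2 * C + 1) * deltaSeq f :=
  statement7_general C hC h f hf

end
end

section
/- Let X be a Banach space and C > 0 such that ca_{ρ*}(x*_n) ≤ C·δ(x*_n) for every bounded sequence (x*_n) in X*. Then wca_{ρ*}(x*_n) ≤ 2C·wk_{X*}({x*_n : n ∈ ℕ}) for every bounded sequence (x*_n) in X*. -/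
open Metric NormedSpace Filter Topology Set

noncomputable section

/-!
It suffices to find, for every `ε > 0`, a subsequence with `δ ≤ 2 wk + ε`. If there were none,
every infinite `N ⊆ ℕ` would carry a functional of norm `≤ 1` oscillating along `N` across two
levels `a < b` of a fixed finite grid with `b - a > 2 wk + ε / 2`. A Ramsey-type argument fixes one
pair of levels and a subsequence `(y k)` such that for all `n ≤ m` some functional is `≤ a` on
`y 0, …, y (n - 1)` and `≥ b` on `y n, …, y (m - 1)`. Weak* compactness of the balls of the dual
and of the bidual then gives a point of the weak* closure of `{y k}` in the bidual at distance
`≥ (b - a) / 2` from the space, contradicting the choice of the levels.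
-/

theorem exists_seq_of_forall_exists {α : Type*} {P : α → Prop} {R : α → α → Prop} {a : α}
    (ha : P a) (h : ∀ x, P x → ∃ y, P y ∧ R x y) :
    ∃ f : ℕ → α, f 0 = a ∧ ∀ n, P (f n) ∧ R (f n) (f (n + 1)) := by
  choose! g hgP hgR using h
  have hP : ∀ n, P (g^[n] a) := by
    intro n
    induction n with
    | zero => exact ha
    | succ n ih => rw [Function.iterate_succ_apply']; exact hgP _ ih
  refine ⟨fun n => g^[n] a, rfl, fun n => ⟨hP n, ?_⟩⟩
  show R (g^[n] a) (g^[n + 1] a)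
  rw [Function.iterate_succ_apply']
  exact hgR _ (hP n)

theorem Set.Finite.exists_infinite_fiber {β : Type*} {f : ℕ → β} {t : Set β} (ht : t.Finite)
    (hf : ∀ n, f n ∈ t) : ∃ y ∈ t, (f ⁻¹' {y}).Infinite := by
  by_contra! H
  exact infinite_univ ((ht.biUnion H).subset fun n _ => mem_biUnion (hf n) rfl)

namespace Oscillation

variable {ι : Type*} (A B : ι → Set ℕ)

def Realizes (i : ι) (π : Finset ℕ × Finset ℕ) : Prop :=
  ↑π.1 ⊆ A i ∧ ↑π.2 ⊆ B i

def Oscillates (i : ι) (N : Set ℕ) : Prop :=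
  (N ∩ A i).Infinite ∧ (N ∩ B i).Infinite

def Persistent (π : Finset ℕ × Finset ℕ) (M : Set ℕ) : Prop :=
  ∀ N ⊆ M, N.Infinite → ∃ i, Realizes A B i π ∧ Oscillates A B i N

def extend (π : Finset ℕ × Finset ℕ) (k : ℕ) : Bool → Finset ℕ × Finset ℕ
  | true => (insert k π.1, π.2)
  | false => (π.1, insert k π.2)

def cut (K : Finset ℕ) (t : ℕ) : Finset ℕ × Finset ℕ :=
  (K.filter (· < t), K.filter (t ≤ ·))

variable {A B}

theorem Oscillates.mono {i : ι} {N N' : Set ℕ} (h : Oscillates A B i N) (hN : N ⊆ N') :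
    Oscillates A B i N' :=
  ⟨h.1.mono (inter_subset_inter_left _ hN), h.2.mono (inter_subset_inter_left _ hN)⟩

theorem Oscillates.diff {i : ι} {N T : Set ℕ} (h : Oscillates A B i N) (hT : T.Finite) :
    Oscillates A B i (N \ T) := by
  rw [Oscillates, ← inter_sdiff_right_comm, ← inter_sdiff_right_comm]
  exact ⟨h.1.sdiff hT, h.2.sdiff hT⟩

theorem Oscillates.exists_realizes_extend {i : ι} {N : Set ℕ} {π : Finset ℕ × Finset ℕ}
    (h : Oscillates A B i N) (hπ : Realizes A B i π) (s : Bool) :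
    ∃ k ∈ N, Realizes A B i (extend π k s) := by
  cases s
  · obtain ⟨k, hkN, hk⟩ := h.2.nonempty
    exact ⟨k, hkN, hπ.1, by simpa [extend, insert_subset_iff] using ⟨hk, hπ.2⟩⟩
  · obtain ⟨k, hkN, hk⟩ := h.1.nonempty
    exact ⟨k, hkN, by simpa [extend, insert_subset_iff] using ⟨hk, hπ.1⟩, hπ.2⟩

theorem Persistent.mono {π : Finset ℕ × Finset ℕ} {M M' : Set ℕ} (h : Persistent A B π M)
    (hM : M' ⊆ M) : Persistent A B π M' :=
  fun N hN hNi => h N (hN.trans hM) hNi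

theorem cut_insert (K : Finset ℕ) (k t : ℕ) :
    cut (insert k K) t = extend (cut K t) k (decide (k < t)) := by
  by_cases h : k < t
  · simp [cut, extend, Finset.filter_insert, h, not_le.2 h]
  · simp [cut, extend, Finset.filter_insert, h, not_lt.1 h]

theorem finite_range_cut (K : Finset ℕ) : (range (cut K)).Finite :=
  (K.powerset ×ˢ K.powerset).finite_toSet.subset <| by
    rintro _ ⟨t, rfl⟩
    simp only [cut, Finset.coe_product, mem_prod, Finset.mem_coe, Finset.mem_powerset]
    exact ⟨Finset.filter_subset _ _, Finset.filter_subset _ _⟩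

/-- If no `k` works, pick `k₀ < k₁ < ⋯` along shrinking sets `S₀ ⊇ S₁ ⊇ ⋯`, each `kₙ` with an
extension of some pattern that no oscillation on `Sₙ₊₁` realizes. Infinitely many `kₙ` share the
pattern and the side, and an oscillation on these `kₙ` realizing the pattern contradicts this. -/
theorem exists_persistent_extend {pats : Set (Finset ℕ × Finset ℕ)} (hpats : pats.Finite)
    {M : Set ℕ} (hM : M.Infinite) (h : ∀ π ∈ pats, Persistent A B π M) :
    ∃ k ∈ M, ∃ M' ⊆ M, M'.Infinite ∧ ∀ π ∈ pats, ∀ s, Persistent A B (extend π k s) M' := by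
  by_contra! H
  have step : ∀ S : Set ℕ, S ⊆ M ∧ S.Infinite → ∃ S', (S' ⊆ M ∧ S'.Infinite) ∧
      ∃ k ∈ S, S' ⊆ S ∧ (∀ m ∈ S', k < m) ∧ ∃ π ∈ pats, ∃ s,
        ∀ i, Realizes A B i (extend π k s) → ¬ Oscillates A B i S' := by
    rintro S ⟨hSM, hS⟩
    obtain ⟨k, hk⟩ := hS.nonempty
    obtain ⟨π, hπ, s, hs⟩ :=
      H k (hSM hk) (S \ Iic k) (sdiff_subset.trans hSM) (hS.sdiff (finite_Iic k))
    simp only [Persistent, not_forall, not_exists, not_and, exists_prop] at hs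
    obtain ⟨S', hS'k, hS', hclean⟩ := hs
    exact ⟨S', ⟨hS'k.trans (sdiff_subset.trans hSM), hS'⟩, k, hk, hS'k.trans sdiff_subset,
      fun m hm => not_le.1 (hS'k hm).2, π, hπ, s, hclean⟩
  obtain ⟨S, -, hS⟩ := exists_seq_of_forall_exists ⟨subset_rfl, hM⟩ step
  choose k hkS hsub hgt π hπ s hclean using fun n => (hS n).2
  have hk : StrictMono k := strictMono_nat_of_lt_succ fun n => hgt n _ (hkS (n + 1))
  have hanti : Antitone S := antitone_nat_of_succ_le hsub
  obtain ⟨⟨π₀, s₀⟩, hmem, hJ⟩ := (hpats.prod finite_univ).exists_infinite_fiber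
    (f := fun n => (π n, s n)) fun n => mk_mem_prod (hπ n) (mem_univ _)
  obtain ⟨i, hreal, hosc⟩ := h π₀ hmem.1 (k '' _)
    (by rintro _ ⟨n, -, rfl⟩; exact (hS n).1.1 (hkS n)) (hJ.image hk.injective.injOn)
  obtain ⟨_, ⟨n, hn, rfl⟩, hext⟩ := hosc.exists_realizes_extend hreal s₀
  simp only [mem_preimage, mem_singleton_iff, Prod.mk.injEq] at hn
  refine hclean n i (hn.1 ▸ hn.2 ▸ hext) ((hosc.diff ((finite_Iic n).image k)).mono ?_)
  rintro _ ⟨⟨m, -, rfl⟩, hm⟩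
  exact hanti (Nat.succ_le_of_lt (not_le.1 fun hmn => hm ⟨m, hmn, rfl⟩)) (hkS m)

theorem exists_strictMono_cut {M : Set ℕ} (hM : M.Infinite) (h : Persistent A B (∅, ∅) M) :
    ∃ L : ℕ → ℕ, StrictMono L ∧ ∀ n m, n ≤ m →
      ∃ i, (∀ j < n, L j ∈ A i) ∧ ∀ j, n ≤ j → j < m → L j ∈ B i := by
  have step : ∀ p : Finset ℕ × Set ℕ, (p.2.Infinite ∧ ∀ t, Persistent A B (cut p.1 t) p.2) →
      ∃ q : Finset ℕ × Set ℕ, (q.2.Infinite ∧ ∀ t, Persistent A B (cut q.1 t) q.2) ∧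
        ∃ k ∈ p.2, q.1 = insert k p.1 ∧ q.2 ⊆ p.2 ∧ ∀ m ∈ q.2, k < m := by
    rintro ⟨K, S⟩ ⟨hS, hcut⟩
    obtain ⟨k, hk, S', hS'S, hS', hext⟩ :=
      exists_persistent_extend (finite_range_cut K) hS (by rintro _ ⟨t, rfl⟩; exact hcut t)
    refine ⟨(insert k K, S' \ Iic k), ⟨hS'.sdiff (finite_Iic k), fun t => ?_⟩, k, hk, rfl,
      sdiff_subset.trans hS'S, fun m hm => not_le.1 hm.2⟩
    rw [cut_insert]
    exact (hext _ ⟨t, rfl⟩ _).mono sdiff_subset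
  obtain ⟨p, -, hp⟩ := exists_seq_of_forall_exists (a := (∅, M))
    ⟨hM, fun t => by simpa [cut] using h⟩ step
  choose L hLS hK hsub hgt using fun n => (hp n).2
  have hL : StrictMono L := strictMono_nat_of_lt_succ fun n => hgt n _ (hLS (n + 1))
  have hLK : ∀ m, ∀ j < m, L j ∈ (p m).1 := by
    intro m
    induction m with
    | zero => simp
    | succ m ih =>
      intro j hj
      rw [hK m, Finset.mem_insert]
      rcases Nat.lt_succ_iff_lt_or_eq.1 hj with hj | rfl
      exacts [Or.inr (ih j hj), Or.inl rfl]
  refine ⟨L, hL, fun n m hnm => ?_⟩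
  obtain ⟨i, ⟨hA, hB⟩, -⟩ := (hp m).1.2 (L n) _ subset_rfl (hp m).1.1
  refine ⟨i, fun j hj => hA ?_, fun j hnj hjm => hB ?_⟩
  · simp [cut, hLK m j (hj.trans_le hnm), hL hj]
  · simp [cut, hLK m j hjm, hL.monotone hnj]

theorem exists_persistent_of_finset {α : Type*} {A B : α → ι → Set ℕ} (s : Finset α)
    {M : Set ℕ} (hM : M.Infinite)
    (h : ∀ N ⊆ M, N.Infinite → ∃ g ∈ s, ∃ i, Oscillates (A g) (B g) i N) :
    ∃ g ∈ s, ∃ M' ⊆ M, M'.Infinite ∧ Persistent (A g) (B g) (∅, ∅) M' := by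
  classical
  induction s using Finset.induction_on generalizing M with
  | empty =>
    obtain ⟨g, hg, -⟩ := h M subset_rfl hM
    exact absurd hg (Finset.notMem_empty g)
  | insert g t hg ih =>
    by_cases hbad : ∃ M₁ ⊆ M, M₁.Infinite ∧ ∀ i, ¬ Oscillates (A g) (B g) i M₁
    · obtain ⟨M₁, hM₁M, hM₁, hnot⟩ := hbad
      obtain ⟨g', hg', M', hM'M₁, hM', hpers⟩ := ih hM₁ fun N hN hNi => by
        obtain ⟨g', hg', i, hi⟩ := h N (hN.trans hM₁M) hNi
        rcases Finset.mem_insert.1 hg' with rfl | hg'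
        · exact absurd (hi.mono hN) (hnot i)
        · exact ⟨g', hg', i, hi⟩
      exact ⟨g', Finset.mem_insert_of_mem hg', M', hM'M₁.trans hM₁M, hM', hpers⟩
    · push Not at hbad
      refine ⟨g, Finset.mem_insert_self g t, M, subset_rfl, hM, fun N hN hNi => ?_⟩
      obtain ⟨i, hi⟩ := hbad N hN hNi
      exact ⟨i, by simp [Realizes], hi⟩

end Oscillation

section WeakStar

variable {E : Type*} [NormedAddCommGroup E] [NormedSpace ℝ E]

theorem exists_norm_le_mapClusterPt {F : ℕ → StrongDual ℝ E} {r : ℝ} (hF : ∀ n, ‖F n‖ ≤ r) :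
    ∃ G : StrongDual ℝ E, ‖G‖ ≤ r ∧
      MapClusterPt (StrongDual.toWeakDual G) atTop (StrongDual.toWeakDual ∘ F) := by
  obtain ⟨w, hw, hcl⟩ := (WeakDual.isCompact_closedBall (0 : StrongDual ℝ E) r).exists_mapClusterPt
    (f := atTop) (tendsto_principal.2 (.of_forall fun n => mem_closedBall_zero_iff.2 (hF n)))
  exact ⟨WeakDual.toStrongDual w, mem_closedBall_zero_iff.1 hw, hcl⟩

theorem apply_mem_of_mapClusterPt {F : ℕ → StrongDual ℝ E} {G : StrongDual ℝ E}
    (hG : MapClusterPt (StrongDual.toWeakDual G) atTop (StrongDual.toWeakDual ∘ F)) (z : E)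
    {S : Set ℝ} (hS : IsClosed S) (hF : ∀ᶠ n in atTop, F n z ∈ S) : G z ∈ S :=
  (hS.preimage (WeakDual.eval_continuous z)).mem_of_mapClusterPt hG hF

theorem abs_apply_sub_le_norm_sub (u : StrongDual ℝ (StrongDual ℝ E)) (z : E)
    {F : StrongDual ℝ E} (hF : ‖F‖ ≤ 1) : |u F - F z| ≤ ‖u - inclusionInDoubleDual ℝ E z‖ :=
  calc |u F - F z| = ‖(u - inclusionInDoubleDual ℝ E z) F‖ := by simp [Real.norm_eq_abs]
    _ ≤ ‖u - inclusionInDoubleDual ℝ E z‖ := ContinuousLinearMap.unit_le_opNorm _ _ hF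

theorem norm_le_of_mem_wstarClosure {S : Set (StrongDual ℝ E)} {M : ℝ} (hS : ∀ F ∈ S, ‖F‖ ≤ M)
    {F : StrongDual ℝ E} (hF : F ∈ wstarClosure S) : ‖F‖ ≤ M := by
  have hball : closure (StrongDual.toWeakDual '' S) ⊆ WeakDual.toStrongDual ⁻¹' closedBall 0 M := by
    refine closure_minimal ?_ (WeakDual.isClosed_closedBall 0 M)
    rintro _ ⟨G, hG, rfl⟩
    exact mem_closedBall_zero_iff.2 (hS G hG)
  exact mem_closedBall_zero_iff.1 (hball hF)

theorem infDist_le_wkMeasure {A : Set E} {M : ℝ} (hA : ∀ z ∈ A, ‖z‖ ≤ M)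
    {u : StrongDual ℝ (StrongDual ℝ E)} (hu : u ∈ wstarClosure (inclusionInDoubleDual ℝ E '' A)) :
    infDist u (range (inclusionInDoubleDual ℝ E)) ≤ wkMeasure A := by
  refine le_ciSup (f := fun v : wstarClosure (inclusionInDoubleDual ℝ E '' A) =>
    infDist (v : StrongDual ℝ (StrongDual ℝ E)) (range (inclusionInDoubleDual ℝ E))) ⟨M, ?_⟩ ⟨u, hu⟩
  rintro _ ⟨v, rfl⟩
  calc infDist (v : StrongDual ℝ (StrongDual ℝ E)) (range (inclusionInDoubleDual ℝ E))
      ≤ dist (v : StrongDual ℝ (StrongDual ℝ E)) (inclusionInDoubleDual ℝ E 0) :=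
        infDist_le_dist_of_mem (mem_range_self 0)
    _ ≤ M := by
      rw [map_zero, dist_zero_right]
      refine norm_le_of_mem_wstarClosure ?_ v.2
      rintro _ ⟨z, hz, rfl⟩
      exact (double_dual_bound ℝ E z).trans (hA z hz)

variable {y : ℕ → E} {a b : ℝ}

theorem exists_infinite_cut_of_finite_cuts (hcut : ∀ n m, n ≤ m → ∃ F : StrongDual ℝ E, ‖F‖ ≤ 1 ∧
      (∀ i < n, F (y i) ≤ a) ∧ ∀ i, n ≤ i → i < m → b ≤ F (y i)) (n : ℕ) :
    ∃ F : StrongDual ℝ E, ‖F‖ ≤ 1 ∧ (∀ i < n, F (y i) ≤ a) ∧ ∀ i, n ≤ i → b ≤ F (y i) := by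
  choose F hF1 hFa hFb using fun m => hcut n (n + m) (Nat.le_add_right n m)
  obtain ⟨G, hG, hcl⟩ := exists_norm_le_mapClusterPt hF1
  refine ⟨G, hG, fun i hi => apply_mem_of_mapClusterPt hcl _ isClosed_Iic
    (.of_forall fun m => hFa m i hi), fun i hi => apply_mem_of_mapClusterPt hcl _ isClosed_Ici ?_⟩
  filter_upwards [eventually_gt_atTop i] with m hm using hFb m i hi (by omega)

/-- With `Fₙ ≤ a` before `n` and `Fₙ ≥ b` from `n` on, a weak* cluster point `u` of `(yₖ)` in the
bidual and a weak* cluster point `G` of `(Fₙ)` satisfy `u Fₙ ≥ b` and `u G ≤ a`. As `Fₙ z` and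
`G z` stay within `‖u - z‖` of `u Fₙ` and `u G`, this forces `‖u - z‖ ≥ (b - a) / 2`. -/
theorem half_sub_le_wkMeasure {A : Set E} {M : ℝ} (hA : ∀ z ∈ A, ‖z‖ ≤ M) (hy : ∀ k, y k ∈ A)
    (hcut : ∀ n m, n ≤ m → ∃ F : StrongDual ℝ E, ‖F‖ ≤ 1 ∧
      (∀ i < n, F (y i) ≤ a) ∧ ∀ i, n ≤ i → i < m → b ≤ F (y i)) :
    (b - a) / 2 ≤ wkMeasure A := by
  choose F hF1 hFa hFb using exists_infinite_cut_of_finite_cuts hcut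
  obtain ⟨G, hG1, hGcl⟩ := exists_norm_le_mapClusterPt hF1
  obtain ⟨u, -, hucl⟩ := exists_norm_le_mapClusterPt (F := fun k => inclusionInDoubleDual ℝ E (y k))
    fun k => (double_dual_bound ℝ E _).trans (hA _ (hy k))
  have hu : u ∈ wstarClosure (inclusionInDoubleDual ℝ E '' A) := by
    have hcl := isClosed_closure (s := StrongDual.toWeakDual '' (inclusionInDoubleDual ℝ E '' A))
    exact hcl.mem_of_mapClusterPt hucl
      (.of_forall fun k => subset_closure ⟨_, ⟨y k, hy k, rfl⟩, rfl⟩)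
  have hGa : ∀ k, G (y k) ≤ a := fun k => apply_mem_of_mapClusterPt hGcl _ isClosed_Iic
    ((eventually_gt_atTop k).mono fun n hn => hFa n k hn)
  have hub : ∀ n, b ≤ u (F n) := fun n => apply_mem_of_mapClusterPt hucl _ isClosed_Ici
    ((eventually_ge_atTop n).mono fun k hk => hFb n k hk)
  have hua : u G ≤ a := apply_mem_of_mapClusterPt hucl _ isClosed_Iic (.of_forall hGa)
  have hdist : ∀ z, (b - a) / 2 ≤ dist u (inclusionInDoubleDual ℝ E z) := by
    intro z
    rw [dist_eq_norm]
    have hFz : ∀ n, b - ‖u - inclusionInDoubleDual ℝ E z‖ ≤ F n z := fun n => by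
      linarith [hub n, (abs_le.1 (abs_apply_sub_le_norm_sub u z (hF1 n))).2]
    have hGz := apply_mem_of_mapClusterPt hGcl z isClosed_Ici (.of_forall hFz)
    linarith [mem_Ici.1 hGz, (abs_le.1 (abs_apply_sub_le_norm_sub u z hG1)).1]
  refine le_trans ?_ (infDist_le_wkMeasure hA hu)
  exact (le_infDist (range_nonempty _)).2 fun _ ⟨z, hz⟩ => hz ▸ hdist z

end WeakStar

theorem exists_finset_grid (M : ℝ) {h : ℝ} (hh : 0 < h) :
    ∃ Λ : Finset ℝ, ∀ v, |v| ≤ M → ∃ ℓ ∈ Λ, ℓ + h ∈ Λ ∧ ℓ ≤ v ∧ v < ℓ + h := by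
  set n : ℤ := ⌈M / h⌉ + 1
  refine ⟨(Finset.Icc (-n) n).image fun k : ℤ => (k : ℝ) * h, fun v hv => ?_⟩
  have hlow : -⌈M / h⌉ ≤ ⌊v / h⌋ := Int.le_floor.2 <| by
    push_cast
    have : -(M / h) ≤ v / h := by rw [← neg_div]; gcongr; linarith [neg_abs_le v]
    linarith [Int.le_ceil (M / h)]
  have hup : ⌊v / h⌋ ≤ ⌈M / h⌉ := (Int.floor_le_floor (by gcongr; exact le_of_abs_le hv)).trans
    (Int.floor_le_ceil _)
  refine ⟨⌊v / h⌋ * h, Finset.mem_image.2 ⟨⌊v / h⌋, Finset.mem_Icc.2 ⟨by omega, by omega⟩, rfl⟩,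
    Finset.mem_image.2 ⟨⌊v / h⌋ + 1, Finset.mem_Icc.2 ⟨by omega, by omega⟩, by push_cast; ring⟩,
    ?_, ?_⟩
  · calc (⌊v / h⌋ : ℝ) * h ≤ v / h * h := by gcongr; exact Int.floor_le _
      _ = v := div_mul_cancel₀ v hh.ne'
  · calc v = v / h * h := (div_mul_cancel₀ v hh.ne').symm
      _ < (⌊v / h⌋ + 1) * h := by gcongr; exact Int.lt_floor_add_one _
      _ = ⌊v / h⌋ * h + h := by ring

theorem exists_levels_of_frequently_gap {Λ : Finset ℝ} {M h c : ℝ}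
    (hΛ : ∀ v, |v| ≤ M → ∃ ℓ ∈ Λ, ℓ + h ∈ Λ ∧ ℓ ≤ v ∧ v < ℓ + h) {v : ℕ → ℝ}
    (hv : ∀ k, |v k| ≤ M) (hgap : ∀ n, ∃ i j, n ≤ i ∧ n ≤ j ∧ v i + c < v j) :
    ∃ a ∈ Λ, ∃ b ∈ Λ, c - 2 * h < b - a ∧ {k | v k ≤ a}.Infinite ∧ {k | b ≤ v k}.Infinite := by
  choose I J hI hJ hIJ using hgap
  choose! ℓ hℓ hℓh hℓle hltℓ using hΛ
  set cell := fun n => (ℓ (v (I n)), ℓ (v (J n)))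
  obtain ⟨⟨p, q⟩, hpq, hN⟩ := (Λ ×ˢ Λ).finite_toSet.exists_infinite_fiber (f := cell)
    fun n => by simp [cell, hℓ _ (hv _)]
  have hcell : ∀ n ∈ cell ⁻¹' {(p, q)}, ℓ (v (I n)) = p ∧ ℓ (v (J n)) = q :=
    fun n hn => Prod.mk.inj hn
  have unbounded : ∀ t, ∃ n ∈ cell ⁻¹' {(p, q)}, t < n := hN.exists_gt
  obtain ⟨n₀, hn₀, -⟩ := unbounded 0
  obtain ⟨hp₀, hq₀⟩ := hcell n₀ hn₀
  refine ⟨p + h, hp₀ ▸ hℓh _ (hv _), q, (Finset.mem_product.1 hpq).2, ?_, ?_, ?_⟩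
  · have := hℓle _ (hv (I n₀))
    have := hltℓ _ (hv (J n₀))
    linarith [hIJ n₀]
  · refine infinite_of_forall_exists_gt fun t => ?_
    obtain ⟨n, hn, htn⟩ := unbounded t
    exact ⟨I n, ((hcell n hn).1 ▸ hltℓ _ (hv (I n))).le, htn.trans_le (hI n)⟩
  · refine infinite_of_forall_exists_gt fun t => ?_
    obtain ⟨n, hn, htn⟩ := unbounded t
    exact ⟨J n, (hcell n hn).2 ▸ hℓle _ (hv (J n)), htn.trans_le (hJ n)⟩

section Subsequence

variable {E : Type*} [NormedAddCommGroup E] [NormedSpace ℝ E]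

theorem exists_frequently_gap_of_lt_deltaSeq {y : ℕ → E} {c : ℝ} (hc : c < deltaSeq y) :
    ∃ F ∈ closedBall (0 : StrongDual ℝ E) 1,
      ∀ n, ∃ i j, n ≤ i ∧ n ≤ j ∧ F (y i) + c < F (y j) := by
  obtain ⟨⟨F, hF⟩, hcF⟩ := exists_lt_of_lt_ciSup hc
  refine ⟨F, hF, fun n => ?_⟩
  have hbdd : BddBelow (range fun m => sSup {r : ℝ | ∃ i j, m ≤ i ∧ m ≤ j ∧
      r = |F (y i) - F (y j)|}) := by
    refine ⟨0, ?_⟩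
    rintro _ ⟨m, rfl⟩
    refine Real.sSup_nonneg ?_
    rintro _ ⟨i, j, -, -, rfl⟩
    exact abs_nonneg _
  have hn := hcF.trans_le (ciInf_le hbdd n)
  obtain ⟨_, ⟨i, j, hi, hj, rfl⟩, hr⟩ :=
    exists_lt_of_lt_csSup (by exact ⟨|F (y n) - F (y n)|, n, n, le_rfl, le_rfl, rfl⟩) hn
  rcases lt_abs.1 hr with hr | hr
  · exact ⟨j, i, hj, hi, by linarith⟩
  · exact ⟨i, j, hi, hj, by linarith⟩

theorem exists_strictMono_deltaSeq_le {x : ℕ → E} {M : ℝ} (hx : ∀ n, ‖x n‖ ≤ M) {ε : ℝ}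
    (hε : 0 < ε) :
    ∃ φ : ℕ → ℕ, StrictMono φ ∧ deltaSeq (x ∘ φ) ≤ 2 * wkMeasure (range x) + ε := by
  by_contra! H
  obtain ⟨Λ, hΛ⟩ := exists_finset_grid M (by positivity : 0 < ε / 4)
  set w := wkMeasure (range x)
  let levels := (Λ ×ˢ Λ).filter fun p : ℝ × ℝ => 2 * w + ε / 2 < p.2 - p.1
  let A : ℝ × ℝ → closedBall (0 : StrongDual ℝ E) 1 → Set ℕ := fun p F => {k | F.1 (x k) ≤ p.1}
  let B : ℝ × ℝ → closedBall (0 : StrongDual ℝ E) 1 → Set ℕ := fun p F => {k | p.2 ≤ F.1 (x k)}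
  have hosc : ∀ N ⊆ univ, N.Infinite →
      ∃ p ∈ levels, ∃ F, Oscillation.Oscillates (A p) (B p) F N := by
    rintro N - hN
    have hφ : StrictMono (Nat.nth (· ∈ N)) := Nat.nth_strictMono hN
    have hφN : ∀ k, Nat.nth (· ∈ N) k ∈ N := Nat.nth_mem_of_infinite hN
    obtain ⟨F, hF, hgap⟩ := exists_frequently_gap_of_lt_deltaSeq (H _ hφ)
    have hFx : ∀ k, |F (x (Nat.nth (· ∈ N) k))| ≤ M := fun k => by
      simpa using F.le_of_opNorm_le (mem_closedBall_zero_iff.1 hF) (x (Nat.nth (· ∈ N) k)) |>.trans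
        (by simpa using hx _)
    obtain ⟨a, ha, b, hb, hab, hA, hB⟩ := exists_levels_of_frequently_gap hΛ hFx hgap
    refine ⟨(a, b), Finset.mem_filter.2 ⟨Finset.mem_product.2 ⟨ha, hb⟩, by linarith⟩, ⟨F, hF⟩,
      (hA.image hφ.injective.injOn).mono ?_, (hB.image hφ.injective.injOn).mono ?_⟩
    all_goals rintro _ ⟨k, hk, rfl⟩; exact ⟨hφN k, hk⟩
  obtain ⟨p, hp, M', -, hM', hpers⟩ :=
    Oscillation.exists_persistent_of_finset levels infinite_univ hosc
  obtain ⟨L, -, hL⟩ := Oscillation.exists_strictMono_cut hM' hpers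
  have hwk := half_sub_le_wkMeasure (A := range x) (y := x ∘ L) (by rintro _ ⟨n, rfl⟩; exact hx n)
    (fun k => mem_range_self _) fun n m hnm => by
      obtain ⟨F, hA, hB⟩ := hL n m hnm
      exact ⟨F.1, mem_closedBall_zero_iff.1 F.2, hA, hB⟩
  linarith [(Finset.mem_filter.1 hp).2]

theorem caRhoStar_nonneg (x : ℕ → StrongDual ℝ E) : 0 ≤ caRhoStar x := by
  unfold caRhoStar
  refine Real.iSup_nonneg fun _ => Real.iInf_nonneg fun _ => Real.sSup_nonneg ?_
  rintro _ ⟨i, j, -, -, v, -, rfl⟩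
  exact abs_nonneg _

theorem wcaRhoStar_le_caRhoStar_comp (x : ℕ → StrongDual ℝ E) {φ : ℕ → ℕ} (hφ : StrictMono φ) :
    wcaRhoStar x ≤ caRhoStar (x ∘ φ) := by
  have hbdd : BddBelow (range fun ψ : {ψ : ℕ → ℕ // StrictMono ψ} => caRhoStar (x ∘ ψ.1)) := by
    refine ⟨0, ?_⟩
    rintro _ ⟨ψ, rfl⟩
    exact caRhoStar_nonneg _
  exact ciInf_le hbdd ⟨φ, hφ⟩

end Subsequence

theorem statement8_general {X : Type*} [NormedAddCommGroup X] [NormedSpace ℝ X]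
    (C : ℝ) (hC : 0 < C)
    (h : ∀ f : ℕ → StrongDual ℝ X, (∃ M : ℝ, ∀ n, ‖f n‖ ≤ M) → caRhoStar f ≤ C * deltaSeq f)
    (f : ℕ → StrongDual ℝ X) (hf : ∃ M : ℝ, ∀ n, ‖f n‖ ≤ M) :
    wcaRhoStar f ≤ 2 * C * wkMeasure (Set.range f) := by
  obtain ⟨M, hM⟩ := hf
  refine le_of_forall_pos_le_add fun ε hε => ?_
  obtain ⟨φ, hφ, hδ⟩ := exists_strictMono_deltaSeq_le hM (div_pos hε hC)
  calc wcaRhoStar f ≤ caRhoStar (f ∘ φ) := wcaRhoStar_le_caRhoStar_comp f hφ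
    _ ≤ C * deltaSeq (f ∘ φ) := h _ ⟨M, fun n => hM (φ n)⟩
    _ ≤ C * (2 * wkMeasure (range f) + ε / C) := by gcongr
    _ = 2 * C * wkMeasure (Set.range f) + ε := by field_simp

/-- If `ca_{ρ*}(x*_n) ≤ C·δ(x*_n)` for every bounded sequence in `X*`, then
`wca_{ρ*}(x*_n) ≤ 2C·wk_{X*}({x*_n})` for every bounded sequence in `X*`. -/
theorem statement8 {X : Type*} [NormedAddCommGroup X] [NormedSpace ℝ X] [CompleteSpace X]
    (C : ℝ) (hC : 0 < C)
    (h : ∀ f : ℕ → StrongDual ℝ X, (∃ M : ℝ, ∀ n, ‖f n‖ ≤ M) → caRhoStar f ≤ C * deltaSeq f)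
    (f : ℕ → StrongDual ℝ X) (hf : ∃ M : ℝ, ∀ n, ‖f n‖ ≤ M) :
    wcaRhoStar f ≤ 2 * C * wkMeasure (Set.range f) :=
  statement8_general C hC h f hf

end
end
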